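/- Let B ≥ 1 and ℓ ≥ 0 be integers, and let x(ℓB), x(ℓB+1), …, x((ℓ+1)B) be states such that each x(k+1) is obtained from x(k) by a balancing step with pair set Ē(k). After relabeling the nodes so that f_1'(x_1(ℓB)) ≥ … ≥ f_n'(x_n(ℓB)), suppose that for every d ∈ {1,…,n−1} with f_d'(x_d(ℓB)) > f_{d+1}'(x_{d+1}(ℓB)) there is a time k ∈ {ℓB,…,(ℓ+1)B−1} and a pair in Ē(k) with one endpoint in {1,…,d} and the other in {d+1,…,n}. Suppose further that x(ℓB) ∈ S and that x* ∈ S minimizes F over S (so the derivatives f_i'(x_i*) all equal a common value). Then Σ_{k=ℓB}^{(ℓ+1)B−1} Σ_{{i,j} ∈ Ē(k)} (f_i'(x_i(k)) − f_j'(x_j(k)))² ≥ (1/n²) Σ_{i=1}^n (f_i'(x_i(ℓB)) − f_i'(x_i*))². -/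

import Mathlib

/-- A balancing step from state `x` to state `y`, specified by a finite set `E` of
unordered pairs of distinct nodes such that: (i) the derivatives of the two endpoints
of each pair differ; (ii) every node belongs to at most one pair in which its
derivative is the strictly larger of the two, and at most one pair in which its
derivative is the strictly smaller of the two; and
`y i = x i − Σ_{j : {i,j} ∈ E} (f_i'(x_i) − f_j'(x_j)) / (2(L_i + L_j))`. -/
def IsBalancingStep (n : ℕ) (f' : Fin n → ℝ → ℝ) (L : Fin n → ℝ)
    (x y : Fin n → ℝ) (E : Finset (Sym2 (Fin n))) : Prop :=
  (∀ i j : Fin n, s(i, j) ∈ E → f' i (x i) ≠ f' j (x j)) ∧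
  (∀ i : Fin n,
    (Finset.univ.filter fun j => s(i, j) ∈ E ∧ f' j (x j) < f' i (x i)).card ≤ 1) ∧
  (∀ i : Fin n,
    (Finset.univ.filter fun j => s(i, j) ∈ E ∧ f' i (x i) < f' j (x j)).card ≤ 1) ∧
  (∀ i : Fin n, y i = x i - ∑ j ∈ Finset.univ.filter (fun j => s(i, j) ∈ E),
      (f' i (x i) - f' j (x j)) / (2 * (L i + L j)))

/-!
Let `g₀ ≥ … ≥ g_{n-1}` be the initial derivatives and `μ` the common derivative at the optimum.
Since `x(ℓB)` and `x*` have the same sum, `μ ∈ [g_{n-1}, g₀]`, so by Cauchy–Schwarz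
`∑ (gᵢ - μ)² ≤ n (g₀ - g_{n-1})² ≤ n (n - 1) ∑_d (g_d - g_{d+1})²`.
A balancing step never pushes a derivative below the smallest derivative among a node and its
partners, nor above the largest. Hence, until the cut between `d` and `d + 1` is first crossed,
the two sides stay separated by `g_d - g_{d+1}`, and the first crossing pair has a derivative
difference at least the sum of the gaps of all cuts charged to it.
-/

open Finset

theorem ConvexOn.monotone_of_hasDerivAt {f f' : ℝ → ℝ} (hf : ConvexOn ℝ Set.univ f)
    (hderiv : ∀ t, HasDerivAt f (f' t) t) : Monotone f' := by
  intro a b hab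
  simpa only [(hderiv _).deriv] using
    hf.monotoneOn_deriv (fun t _ => (hderiv t).differentiableAt) (Set.mem_univ a)
      (Set.mem_univ b) hab

theorem sum_deriv_mul_eq_zero_of_isMinOn {ι : Type*} [Fintype ι] {f f' : ι → ℝ → ℝ} {K : ℝ}
    (hderiv : ∀ i t, HasDerivAt (f i) (f' i t) t) {xs : ι → ℝ} (hxs : ∑ i, xs i = K)
    (hmin : ∀ y : ι → ℝ, ∑ i, y i = K → ∑ i, f i (xs i) ≤ ∑ i, f i (y i))
    {v : ι → ℝ} (hv : ∑ i, v i = 0) : ∑ i, f' i (xs i) * v i = 0 := by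
  have hline : HasDerivAt (fun t => ∑ i, f i (xs i + t * v i)) (∑ i, f' i (xs i) * v i) 0 := by
    refine HasDerivAt.fun_sum fun i _ => ?_
    have hinner : HasDerivAt (fun t => xs i + t * v i) (v i) 0 := by
      simpa using ((hasDerivAt_id (0 : ℝ)).mul_const (v i)).const_add (xs i)
    simpa [Function.comp_def] using (hderiv i (xs i + 0 * v i)).comp 0 hinner
  refine IsLocalMin.hasDerivAt_eq_zero (Filter.Eventually.of_forall fun t => ?_) hline
  refine (le_of_eq (by simp)).trans (hmin _ ?_)
  simp [sum_add_distrib, ← mul_sum, hv, hxs]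

theorem deriv_eq_of_isMinOn {ι : Type*} [Fintype ι] [DecidableEq ι] {f f' : ι → ℝ → ℝ} {K : ℝ}
    (hderiv : ∀ i t, HasDerivAt (f i) (f' i t) t) {xs : ι → ℝ} (hxs : ∑ i, xs i = K)
    (hmin : ∀ y : ι → ℝ, ∑ i, y i = K → ∑ i, f i (xs i) ≤ ∑ i, f i (y i)) (i j : ι) :
    f' i (xs i) = f' j (xs j) := by
  have h := sum_deriv_mul_eq_zero_of_isMinOn hderiv hxs hmin
    (v := Pi.single i 1 - Pi.single j 1) (by simp)
  simp only [Pi.sub_apply, mul_sub, sum_sub_distrib] at h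
  simpa [Pi.single_apply, sub_eq_zero] using h

theorem Finset.sum_le_of_card_filter_pos_le_one {ι : Type*} {s : Finset ι} {t : ι → ℝ} {M : ℝ}
    (hM : 0 ≤ M) (hcard : #{j ∈ s | 0 < t j} ≤ 1) (hle : ∀ j ∈ s, 0 < t j → t j ≤ M) :
    ∑ j ∈ s, t j ≤ M := by
  rw [← sum_filter_add_sum_filter_not s (0 < t ·)]
  have hneg : ∑ j ∈ s with ¬0 < t j, t j ≤ 0 :=
    sum_nonpos fun j hj => not_lt.mp (mem_filter.mp hj).2
  have hpos : ∑ j ∈ s with 0 < t j, t j ≤ #{j ∈ s | 0 < t j} • M :=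
    sum_le_card_nsmul _ _ _ fun j hj => hle j (mem_filter.mp hj).1 (mem_filter.mp hj).2
  have : #{j ∈ s | 0 < t j} • M ≤ 1 • M := nsmul_le_nsmul_left hM hcard
  rw [one_nsmul] at this
  linarith

namespace IsBalancingStep

variable {n : ℕ} {f' : Fin n → ℝ → ℝ} {L : Fin n → ℝ} {x y : Fin n → ℝ} {E : Finset (Sym2 (Fin n))}

/-- The only partner with a smaller derivative moves node `i` by at most `(f'ᵢ(xᵢ) - c) / (2 Lᵢ)`,
which by the Lipschitz bound lowers its derivative by at most half of its excess over `c`. -/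
theorem le_deriv (h : IsBalancingStep n f' L x y E) (hL : ∀ j, 0 < L j) {i : Fin n}
    (hmono : Monotone (f' i)) (hlip : ∀ a b, |f' i a - f' i b| ≤ L i * |a - b|) {c : ℝ}
    (hi : c ≤ f' i (x i)) (hpart : ∀ j, s(i, j) ∈ E → c ≤ f' j (x j)) :
    c ≤ f' i (y i) := by
  obtain ⟨-, hlow, -, hy⟩ := h
  set M := (f' i (x i) - c) / (2 * L i)
  have hLi := hL i
  have hM : 0 ≤ M := div_nonneg (by linarith) (by linarith)
  have hLM : L i * M = (f' i (x i) - c) / 2 := by simp only [M]; field_simp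
  have hdrift : ∑ j ∈ univ with s(i, j) ∈ E,
      (f' i (x i) - f' j (x j)) / (2 * (L i + L j)) ≤ M := by
    refine sum_le_of_card_filter_pos_le_one hM ((le_of_eq ?_).trans (hlow i)) ?_
    · congr 1
      ext j
      simp [div_pos_iff_of_pos_right (by linarith [hL j] : (0 : ℝ) < 2 * (L i + L j))]
    · intro j hj hpos
      have hj := hpart j (mem_filter.mp hj).2
      have hgap : 0 < f' i (x i) - f' j (x j) := by
        by_contra! hle
        exact hpos.not_ge (div_nonpos_of_nonpos_of_nonneg hle (by linarith [hL j]))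
      exact div_le_div₀ (by linarith) (by linarith) (by linarith) (by linarith [hL j])
  have hlipM := hlip (x i) (x i - M)
  rw [sub_sub_cancel, abs_of_nonneg hM] at hlipM
  calc c ≤ f' i (x i) - L i * M := by linarith
    _ ≤ f' i (x i - M) := by linarith [le_abs_self (f' i (x i) - f' i (x i - M))]
    _ ≤ f' i (y i) := hmono (by rw [hy i]; linarith)

theorem neg (h : IsBalancingStep n f' L x y E) :
    IsBalancingStep n (fun i t => -f' i (-t)) L (-x) (-y) E := by
  obtain ⟨hne, hlow, hup, hy⟩ := h
  refine ⟨fun i j hij => by simpa using hne i j hij, fun i => by simpa using hup i,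
    fun i => by simpa using hlow i, fun i => ?_⟩
  simp only [Pi.neg_apply, neg_neg, hy i, neg_sub_neg, neg_sub, sub_eq_add_neg (-x i),
    ← sum_neg_distrib, ← neg_div]
  ring

end IsBalancingStep

section Trajectory

variable {n : ℕ} {f' : Fin n → ℝ → ℝ} {L : Fin n → ℝ} {x : ℕ → Fin n → ℝ}
  {E : ℕ → Finset (Sym2 (Fin n))}

theorem le_deriv_of_forall_not_cross (hL : ∀ i, 0 < L i) (hmono : ∀ i, Monotone (f' i))
    (hlip : ∀ i, ∀ a b, |f' i a - f' i b| ≤ L i * |a - b|) (U : Set (Fin n)) {c : ℝ} {a m : ℕ}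
    (ham : a ≤ m) (hstep : ∀ k, a ≤ k → k < m → IsBalancingStep n f' L (x k) (x (k + 1)) (E k))
    (hclosed : ∀ k, a ≤ k → k < m → ∀ i j, s(i, j) ∈ E k → i ∈ U → j ∈ U)
    (h₀ : ∀ i ∈ U, c ≤ f' i (x a i)) : ∀ i ∈ U, c ≤ f' i (x m i) := by
  induction m, ham using Nat.le_induction with
  | base => exact h₀
  | succ m ham ih =>
    have ih := ih (fun k hak hk => hstep k hak (hk.trans m.lt_succ_self))
      (fun k hak hk => hclosed k hak (hk.trans m.lt_succ_self))
    intro i hi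
    exact (hstep m ham m.lt_succ_self).le_deriv hL (hmono i) (hlip i) (ih i hi)
      fun j hj => ih j (hclosed m ham m.lt_succ_self i j hj hi)

theorem deriv_le_of_forall_not_cross (hL : ∀ i, 0 < L i) (hmono : ∀ i, Monotone (f' i))
    (hlip : ∀ i, ∀ a b, |f' i a - f' i b| ≤ L i * |a - b|) (U : Set (Fin n)) {c : ℝ} {a m : ℕ}
    (ham : a ≤ m) (hstep : ∀ k, a ≤ k → k < m → IsBalancingStep n f' L (x k) (x (k + 1)) (E k))
    (hclosed : ∀ k, a ≤ k → k < m → ∀ i j, s(i, j) ∈ E k → i ∈ U → j ∈ U)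
    (h₀ : ∀ i ∈ U, f' i (x a i) ≤ c) : ∀ i ∈ U, f' i (x m i) ≤ c := by
  have hneg := le_deriv_of_forall_not_cross (f' := fun i t => -f' i (-t)) (x := fun k => -x k)
    hL (fun i a b hab => neg_le_neg (hmono i (neg_le_neg hab)))
    (fun i a b => by simpa [abs_sub_comm, ← sub_eq_neg_add] using hlip i (-a) (-b)) U (c := -c) ham
    (fun k hak hk => (hstep k hak hk).neg) hclosed (fun i hi => by simpa using h₀ i hi)
  simpa using hneg

/-- Take the first time a pair crosses the cut after `d`: until then each side of the cut only
exchanges with itself. -/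
theorem exists_cross_deriv_bounds (hL : ∀ i, 0 < L i) (hmono : ∀ i, Monotone (f' i))
    (hlip : ∀ i, ∀ a b, |f' i a - f' i b| ≤ L i * |a - b|) {a b : ℕ}
    (hstep : ∀ k, a ≤ k → k < b → IsBalancingStep n f' L (x k) (x (k + 1)) (E k))
    (d : Fin n) {lo hi : ℝ} (hlo : ∀ i ≤ d, lo ≤ f' i (x a i))
    (hhi : ∀ j, d < j → f' j (x a j) ≤ hi)
    (hcross : ∃ k, a ≤ k ∧ k < b ∧ ∃ i j, s(i, j) ∈ E k ∧ i ≤ d ∧ d < j) :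
    ∃ k, a ≤ k ∧ k < b ∧ ∃ p q, s(p, q) ∈ E k ∧ p ≤ d ∧ d < q ∧
      lo ≤ f' p (x k p) ∧ f' q (x k q) ≤ hi := by
  classical
  obtain ⟨hak, hkb, p, q, hpq, hpd, hdq⟩ := Nat.find_spec hcross
  have hnot : ∀ k, a ≤ k → k < Nat.find hcross → ∀ i j, s(i, j) ∈ E k → i ≤ d → j ≤ d :=
    fun k hak' hk i j hij hid => not_lt.mp fun hdj =>
      Nat.find_min hcross hk ⟨hak', hk.trans hkb, i, j, hij, hid, hdj⟩
  have hstep' := fun k hak' (hk : k < Nat.find hcross) => hstep k hak' (hk.trans hkb)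
  refine ⟨_, hak, hkb, p, q, hpq, hpd, hdq, ?_, ?_⟩
  · exact le_deriv_of_forall_not_cross hL hmono hlip (Set.Iic d) hak hstep' hnot hlo p hpd
  · refine deriv_le_of_forall_not_cross hL hmono hlip (Set.Ioi d) hak hstep' ?_ hhi q hdq
    intro k hak' hk i j hij hdi
    by_contra hjd
    exact hdi.not_ge (hnot k hak' hk j i (Sym2.eq_swap ▸ hij) (not_lt.mp hjd))

end Trajectory

theorem Finset.sum_sq_le_sum_of_fiberwise {α β : Type*} [DecidableEq β] {s : Finset α}
    {t : Finset β} {ψ : α → β} (hψ : ∀ a ∈ s, ψ a ∈ t) {D : α → ℝ} (hD : ∀ a ∈ s, 0 ≤ D a)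
    {F : β → ℝ} (hfiber : ∀ b ∈ t, (∑ a ∈ s with ψ a = b, D a) ^ 2 ≤ F b) :
    ∑ a ∈ s, D a ^ 2 ≤ ∑ b ∈ t, F b := by
  rw [← sum_fiberwise_of_maps_to hψ]
  exact sum_le_sum fun b hb => (sum_sq_le_sq_sum_of_nonneg fun a ha =>
    hD a (mem_filter.mp ha).1).trans (hfiber b hb)

theorem Antitone.sum_sub_succ_le {G : ℕ → ℝ} (hG : Antitone G) {Φ : Finset ℕ} {lo hi : ℕ}
    (hlohi : lo ≤ hi) (hΦ : Φ ⊆ Icc lo hi) :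
    ∑ d ∈ Φ, (G d - G (d + 1)) ≤ G lo - G (hi + 1) := by
  have htel : ∑ d ∈ Icc lo hi, (G d - G (d + 1)) = G lo - G (hi + 1) := by
    rw [← neg_sub, ← sum_Icc_sub hlohi, ← sum_neg_distrib]
    simp
  rw [← htel]
  exact sum_le_sum_of_subset_of_nonneg hΦ fun d _ _ => sub_nonneg.mpr (hG d.le_succ)

def edgeSqDiff {ι : Type*} (v : ι → ℝ) : Sym2 ι → ℝ :=
  Sym2.lift ⟨fun i j => (v i - v j) ^ 2, fun _ _ => by ring⟩

theorem edgeSqDiff_nonneg {ι : Type*} (v : ι → ℝ) (e : Sym2 ι) : 0 ≤ edgeSqDiff v e := by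
  induction e using Sym2.ind with
  | _ i j => exact sq_nonneg _

/-- The cuts charged to one pair lie between the smallest and the largest of them, so their gaps
telescope to at most that pair's difference. -/
theorem sum_sq_sub_succ_le_sum_edgeSqDiff {n N : ℕ} [NeZero n] {G : ℕ → ℝ} (hG : Antitone G)
    (v : ℕ → Fin n → ℝ) (T : Finset ℕ) (E : ℕ → Finset (Sym2 (Fin n)))
    (hwit : ∀ d < N, G (d + 1) < G d → ∃ k ∈ T, ∃ p q : Fin n, s(p, q) ∈ E k ∧
      (p : ℕ) ≤ d ∧ d < (q : ℕ) ∧ G d ≤ v k p ∧ v k q ≤ G (d + 1)) :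
    ∑ d ∈ range N, (G d - G (d + 1)) ^ 2 ≤ ∑ k ∈ T, ∑ e ∈ E k, edgeSqDiff (v k) e := by
  classical
  set cuts := {d ∈ range N | G (d + 1) < G d}
  have hwit' : ∀ d ∈ cuts, ∃ k ∈ T, ∃ p q : Fin n, s(p, q) ∈ E k ∧
      (p : ℕ) ≤ d ∧ d < (q : ℕ) ∧ G d ≤ v k p ∧ v k q ≤ G (d + 1) := fun d hd =>
    hwit d (mem_range.mp (mem_filter.mp hd).1) (mem_filter.mp hd).2
  choose! k hk p q hE hp hq hlo hhi using hwit'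
  have hgap : ∀ d, 0 ≤ G d - G (d + 1) := fun d => sub_nonneg.mpr (hG d.le_succ)
  rw [← sum_filter_of_ne (p := fun d => G (d + 1) < G d)
    fun d _ hd => lt_of_le_of_ne (hG d.le_succ) fun h => hd (by simp [h]), sum_sigma']
  refine sum_sq_le_sum_of_fiberwise (ψ := fun d => ⟨k d, s(p d, q d)⟩)
    (fun d hd => mem_sigma.mpr ⟨hk d hd, hE d hd⟩) (fun d _ => hgap d) fun b _ => ?_
  set Φ := {d ∈ cuts | (⟨k d, s(p d, q d)⟩ : Σ _ : ℕ, Sym2 (Fin n)) = b}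
  rcases Φ.eq_empty_or_nonempty with hΦ | hΦ
  · simpa [hΦ] using edgeSqDiff_nonneg _ _
  have hmem : ∀ d ∈ Φ, d ∈ cuts ∧ _ := fun d hd => mem_filter.mp hd
  obtain ⟨h₀, hb₀⟩ := hmem _ (Φ.min'_mem hΦ)
  obtain ⟨h₁, hb₁⟩ := hmem _ (Φ.max'_mem hΦ)
  set d₀ := Φ.min' hΦ
  set d₁ := Φ.max' hΦ
  have hd₀₁ : d₀ ≤ d₁ := Φ.min'_le _ (Φ.max'_mem hΦ)
  obtain ⟨hk₀₁, hpq₀₁⟩ := Sigma.mk.inj_iff.mp (hb₀.trans hb₁.symm)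
  have hq : q d₁ = q d₀ := by
    rcases Sym2.eq_iff.mp (eq_of_heq hpq₀₁) with ⟨-, h⟩ | ⟨h, -⟩
    · exact h.symm
    · have := hp d₀ h₀; have := hq d₁ h₁; rw [h] at *; omega
  have hsum : ∑ d ∈ Φ, (G d - G (d + 1)) ≤ v (k d₀) (p d₀) - v (k d₀) (q d₀) := by
    have hΦ' : Φ ⊆ Icc d₀ d₁ := fun d hd => mem_Icc.mpr ⟨Φ.min'_le d hd, Φ.le_max' d hd⟩
    have := hhi d₁ h₁
    rw [hq, ← hk₀₁] at this
    linarith [hG.sum_sub_succ_le hd₀₁ hΦ', hlo d₀ h₀]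
  rw [← hb₀]
  exact pow_le_pow_left₀ (sum_nonneg fun d _ => hgap d) hsum 2

theorem sum_sq_sub_succ_le_sum_edgeSqDiff_of_cross {n : ℕ} [NeZero n] {f' : Fin n → ℝ → ℝ}
    {L : Fin n → ℝ} {x : ℕ → Fin n → ℝ} {E : ℕ → Finset (Sym2 (Fin n))} (hL : ∀ i, 0 < L i)
    (hmono : ∀ i, Monotone (f' i)) (hlip : ∀ i, ∀ a b, |f' i a - f' i b| ≤ L i * |a - b|)
    {a b : ℕ} (hstep : ∀ k, a ≤ k → k < b → IsBalancingStep n f' L (x k) (x (k + 1)) (E k))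
    {G : ℕ → ℝ} (hG : Antitone G) (hGval : ∀ d (hd : d < n), G d = f' ⟨d, hd⟩ (x a ⟨d, hd⟩))
    (hsort : ∀ i j : Fin n, i ≤ j → f' j (x a j) ≤ f' i (x a i))
    (hcross : ∀ d : Fin n, ∀ hd : (d : ℕ) + 1 < n,
      f' ⟨(d : ℕ) + 1, hd⟩ (x a ⟨(d : ℕ) + 1, hd⟩) < f' d (x a d) →
      ∃ k : ℕ, a ≤ k ∧ k < b ∧ ∃ i j : Fin n, s(i, j) ∈ E k ∧ i ≤ d ∧ d < j) :
    ∑ d ∈ range (n - 1), (G d - G (d + 1)) ^ 2 ≤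
      ∑ k ∈ Ico a b, ∑ e ∈ E k, edgeSqDiff (fun i => f' i (x k i)) e := by
  refine sum_sq_sub_succ_le_sum_edgeSqDiff hG _ _ _ fun d hd hgap => ?_
  have hd₀ : d < n := by omega
  have hd₁ : d + 1 < n := by omega
  obtain ⟨k, hak, hkb, p, q, hpq, hpd, hdq, hlo, hhi⟩ := exists_cross_deriv_bounds hL hmono hlip
    hstep ⟨d, hd₀⟩ (lo := G d) (hi := G (d + 1)) (fun i hi => hGval d hd₀ ▸ hsort i _ hi)
    (fun j hj => hGval (d + 1) hd₁ ▸ hsort ⟨d + 1, hd₁⟩ j hj)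
    (hcross ⟨d, hd₀⟩ hd₁ (by rwa [hGval d hd₀, hGval (d + 1) hd₁] at hgap))
  exact ⟨k, mem_Ico.mpr ⟨hak, hkb⟩, p, q, hpq, hpd, hdq, hlo, hhi⟩

theorem sum_sq_sub_le_of_mem_Icc {ι : Type*} [Fintype ι] (G : ℕ → ℝ) (N : ℕ) {w : ι → ℝ} {μ : ℝ}
    (hw : ∀ i, w i ∈ Set.Icc (G N) (G 0)) (hμ : μ ∈ Set.Icc (G N) (G 0)) :
    ∑ i, (w i - μ) ^ 2 ≤ Fintype.card ι * (N * ∑ d ∈ range N, (G d - G (d + 1)) ^ 2) := by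
  have hspread : ∀ i, (w i - μ) ^ 2 ≤ (G 0 - G N) ^ 2 := fun i =>
    sq_le_sq' (by linarith [(hw i).1, hμ.2]) (by linarith [(hw i).2, hμ.1])
  have htel : (G 0 - G N) ^ 2 ≤ N * ∑ d ∈ range N, (G d - G (d + 1)) ^ 2 := by
    have h := sq_sum_le_card_mul_sum_sq (s := range N) (f := fun d => G d - G (d + 1))
    rwa [sum_range_sub', card_range] at h
  calc ∑ i, (w i - μ) ^ 2 ≤ ∑ _ : ι, (G 0 - G N) ^ 2 := sum_le_sum fun i _ => hspread i
    _ = Fintype.card ι * (G 0 - G N) ^ 2 := by simp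
    _ ≤ _ := by gcongr

theorem exists_le_and_exists_ge_of_sum_eq {ι : Type*} [Fintype ι] [Nonempty ι]
    {g : ι → ℝ → ℝ} (hmono : ∀ i, Monotone (g i)) {x y : ι → ℝ} (hsum : ∑ i, x i = ∑ i, y i)
    {μ : ℝ} (hy : ∀ i, g i (y i) = μ) : (∃ i, g i (x i) ≤ μ) ∧ ∃ i, μ ≤ g i (x i) := by
  obtain ⟨i, -, hi⟩ := exists_le_of_sum_le univ_nonempty hsum.le
  obtain ⟨j, -, hj⟩ := exists_le_of_sum_le univ_nonempty hsum.ge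
  exact ⟨⟨i, hy i ▸ hmono i hi⟩, ⟨j, hy j ▸ hmono j hj⟩⟩

/-- Under the hypotheses of Statement 8, if moreover x(ℓB) lies in the
feasible set S = {x : Σᵢ xᵢ = K} and x* ∈ S minimizes F over S, then
Σ_{k=ℓB}^{(ℓ+1)B−1} Σ_{{i,j} ∈ E(k)} (f_i'(x_i(k)) − f_j'(x_j(k)))²
  ≥ (1/n²) Σ_{i=1}^n (f_i'(x_i(ℓB)) − f_i'(x_i*))². -/
theorem stmt_9 (n : ℕ) (hn : 0 < n) (K : ℝ) (f f' : Fin n → ℝ → ℝ) (L : Fin n → ℝ)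
    (hL : ∀ i, 0 < L i)
    (hconv : ∀ i, ConvexOn ℝ Set.univ (f i))
    (hderiv : ∀ i t, HasDerivAt (f i) (f' i t) t)
    (hlip : ∀ i, ∀ a b : ℝ, |f' i a - f' i b| ≤ L i * |a - b|)
    (B : ℕ) (ℓ : ℕ)
    (x : ℕ → Fin n → ℝ) (E : ℕ → Finset (Sym2 (Fin n)))
    (hstep : ∀ k, ℓ * B ≤ k → k < (ℓ + 1) * B →
      IsBalancingStep n f' L (x k) (x (k + 1)) (E k))
    (hsort : ∀ i j : Fin n, i ≤ j → f' j (x (ℓ * B) j) ≤ f' i (x (ℓ * B) i))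
    (hcross : ∀ d : Fin n, ∀ hd : (d : ℕ) + 1 < n,
      f' ⟨(d : ℕ) + 1, hd⟩ (x (ℓ * B) ⟨(d : ℕ) + 1, hd⟩) < f' d (x (ℓ * B) d) →
      ∃ k : ℕ, ℓ * B ≤ k ∧ k < (ℓ + 1) * B ∧
        ∃ i j : Fin n, s(i, j) ∈ E k ∧ i ≤ d ∧ d < j)
    (hfeas : ∑ i, x (ℓ * B) i = K)
    (xs : Fin n → ℝ) (hxs : ∑ i, xs i = K)
    (hmin : ∀ y : Fin n → ℝ, (∑ i, y i = K) → ∑ i, f i (xs i) ≤ ∑ i, f i (y i)) :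
    (1 / (n : ℝ) ^ 2) * ∑ i, (f' i (x (ℓ * B) i) - f' i (xs i)) ^ 2 ≤
    ∑ k ∈ Finset.Ico (ℓ * B) ((ℓ + 1) * B),
      ∑ e ∈ E k, Sym2.lift
        ⟨fun i j => (f' i (x k i) - f' j (x k j)) ^ 2, by intro a b; ring_nf⟩ e := by
  have : NeZero n := ⟨hn.ne'⟩
  have hmono i := (hconv i).monotone_of_hasDerivAt (hderiv i)
  set a := ℓ * B
  set μ := f' 0 (xs 0)
  have hμ i : f' i (xs i) = μ := deriv_eq_of_isMinOn hderiv hxs hmin i 0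
  -- the sorted initial derivatives, clamped at index `n - 1` so that `G` is antitone on all of `ℕ`
  let G (d : ℕ) : ℝ := f' ⟨min d (n - 1), by omega⟩ (x a ⟨min d (n - 1), by omega⟩)
  have hG : Antitone G := fun d d' h => hsort _ _ (Fin.mk_le_mk.mpr (by omega))
  have hGval d (hd : d < n) : G d = f' ⟨d, hd⟩ (x a ⟨d, hd⟩) := by simp [G, Nat.le_sub_one_of_lt hd]
  have hrange i : f' i (x a i) ∈ Set.Icc (G (n - 1)) (G 0) :=
    ⟨by simpa [G] using hsort i _ (Fin.mk_le_mk.mpr (by omega)),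
      by simpa [G] using hsort _ i (Fin.zero_le i)⟩
  have hμmem : μ ∈ Set.Icc (G (n - 1)) (G 0) := by
    obtain ⟨⟨i, hi⟩, ⟨j, hj⟩⟩ := exists_le_and_exists_ge_of_sum_eq hmono (hfeas.trans hxs.symm) hμ
    exact ⟨(hrange i).1.trans hi, hj.trans (hrange j).2⟩
  calc 1 / (n : ℝ) ^ 2 * ∑ i, (f' i (x a i) - f' i (xs i)) ^ 2
      ≤ 1 / (n : ℝ) ^ 2 * (n * ((n - 1 : ℕ) * ∑ d ∈ range (n - 1), (G d - G (d + 1)) ^ 2)) := by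
        simp only [hμ]
        gcongr
        simpa using sum_sq_sub_le_of_mem_Icc G (n - 1) hrange hμmem
    _ ≤ 1 / (n : ℝ) ^ 2 * (n * (n * ∑ d ∈ range (n - 1), (G d - G (d + 1)) ^ 2)) := by
        gcongr
        exact_mod_cast n.sub_le 1
    _ = ∑ d ∈ range (n - 1), (G d - G (d + 1)) ^ 2 := by field_simp
    _ ≤ _ := sum_sq_sub_succ_le_sum_edgeSqDiff_of_cross hL hmono hlip hstep hG hGval hsort hcross
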